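/- arXiv:1202.6558 — 6 statements merged into one kernel-verified Lean document; each statement's English description precedes it below -/
import Mathlib

section
/- Let 0 < α < 1/2 < β < 1 with α + β > 1, let T > 0 and 0 ≤ a < b ≤ T, and let f, g : [0,T] → ℝ be β-Hölder continuous. Then | ∫_a^b (D_{a+}^α f)(t) · (D̃_{b−}^{1−α} g)(t) dt | ≤ k_{α,β} · ‖g‖_{0,T,β} · ( ‖f‖_{a,b,∞} (b−a)^β + ‖f‖_{a,b,β} (b−a)^{2β} ), where k_{α,β} := β·B(α+β, 1−α) / ((α+β−1)·Γ(α)·Γ(1−α)) + α·β·B(α+β, 1+β−α) / ((α+β−1)·(β−α)·Γ(α)·Γ(1−α)), with Γ the Gamma function and B the Beta function. (This is the estimate of Lemma 4.1: up to a sign, the integral above is Zähle's representation of the Young integral ∫_a^b f dg.) -/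
/-!
Using only Hölder continuity, both fractional derivatives are bounded pointwise:
`|D_{a+}^α f (t)| ≤ (‖f‖_∞ (t-a)^(-α) + α ‖f‖_β (t-a)^(β-α) / (β-α)) / Γ(1-α)`,
since `|f t - f s| ≤ ‖f‖_β (t-s)^β` makes the kernel `(t-s)^(-α-1)` integrable when `α < β`,
and likewise `|D̃_{b-}^{1-α} g (t)| ≤ β ‖g‖_β (b-t)^(α+β-1) / ((α+β-1) Γ(α))` when
`α + β > 1`. The product of these bounds integrates over `[a,b]` to two Beta integrals
`∫_a^b (t-a)^p (b-t)^q dt = (b-a)^(p+q+1) B(p+1, q+1)`, one for each summand of `k_{α,β}`.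
-/

open MeasureTheory intervalIntegral

/-- The uniform norm of `f` on `[a,b]`: `‖f‖_{a,b,∞} = sup_{a ≤ r ≤ b} |f r|`. -/
noncomputable def supNorm (f : ℝ → ℝ) (a b : ℝ) : ℝ :=
  sSup ((fun r => |f r|) '' Set.Icc a b)

/-- The set of Hölder ratios of `f` on `[a,b]` with exponent `β`. -/
def holderSet (f : ℝ → ℝ) (a b β : ℝ) : Set ℝ :=
  {c | ∃ r s : ℝ, a ≤ r ∧ r < s ∧ s ≤ b ∧ c = |f s - f r| / (s - r) ^ β}

/-- The `β`-Hölder seminorm of `f` on `[a,b]`: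
`‖f‖_{a,b,β} = sup_{a ≤ r < s ≤ b} |f s - f r| / (s - r)^β`. -/
noncomputable def holderNorm (f : ℝ → ℝ) (a b β : ℝ) : ℝ :=
  sSup (holderSet f a b β)

/-- Left-sided fractional derivative
`D_{a+}^α f (t) = (1/Γ(1-α)) (f t (t-a)^{-α} + α ∫_a^t (f t - f s)(t-s)^{-α-1} ds)`. -/
noncomputable def Dplus (f : ℝ → ℝ) (a α t : ℝ) : ℝ :=
  (1 / Real.Gamma (1 - α)) *
    (f t * (t - a) ^ (-α) + α * ∫ s in a..t, (f t - f s) * (t - s) ^ (-α - 1))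

/-- Sign-normalized right-sided fractional derivative of order `1-α`:
`D̃_{b-}^{1-α} g (t) = (1/Γ(α)) ((g t - g b)(b-t)^{α-1} + (1-α) ∫_t^b (g t - g s)(s-t)^{α-2} ds)`. -/
noncomputable def Dminus (g : ℝ → ℝ) (b α t : ℝ) : ℝ :=
  (1 / Real.Gamma α) *
    ((g t - g b) * (b - t) ^ (α - 1) + (1 - α) * ∫ s in t..b, (g t - g s) * (s - t) ^ (α - 2))

/-- The Beta function `B(x,y) = Γ(x)Γ(y)/Γ(x+y)`. -/
noncomputable def betaFn (x y : ℝ) : ℝ :=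
  Real.Gamma x * Real.Gamma y / Real.Gamma (x + y)

/-- The constant `k_{α,β}` of Lemma 4.1. -/
noncomputable def kConst (α β : ℝ) : ℝ :=
  β * betaFn (α + β) (1 - α) / ((α + β - 1) * Real.Gamma α * Real.Gamma (1 - α)) +
    α * β * betaFn (α + β) (1 + β - α) /
      ((α + β - 1) * (β - α) * Real.Gamma α * Real.Gamma (1 - α))

open Set

lemma holderSet_mono {f : ℝ → ℝ} {a b a' b' β : ℝ} (ha : a' ≤ a) (hb : b ≤ b') :
    holderSet f a b β ⊆ holderSet f a' b' β := by
  rintro c ⟨r, s, hr, hrs, hs, rfl⟩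
  exact ⟨r, s, ha.trans hr, hrs, hs.trans hb, rfl⟩

lemma holderNorm_nonneg (f : ℝ → ℝ) (a b β : ℝ) : 0 ≤ holderNorm f a b β := by
  refine Real.sSup_nonneg ?_
  rintro c ⟨r, s, -, hrs, -, rfl⟩
  have := sub_pos.mpr hrs
  positivity

lemma abs_sub_le_holderNorm_mul {f : ℝ → ℝ} {a b β : ℝ} (hf : BddAbove (holderSet f a b β))
    {r s : ℝ} (hr : a ≤ r) (hrs : r ≤ s) (hs : s ≤ b) :
    |f s - f r| ≤ holderNorm f a b β * (s - r) ^ β := by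
  rcases hrs.eq_or_lt with rfl | hrs
  · simpa using mul_nonneg (holderNorm_nonneg f a b β) (Real.rpow_nonneg le_rfl β)
  · have hpos : 0 < (s - r) ^ β := Real.rpow_pos_of_pos (sub_pos.mpr hrs) β
    rw [← div_le_iff₀ hpos]
    exact le_csSup hf ⟨r, s, hr, hrs, hs, rfl⟩

lemma abs_le_supNorm {f : ℝ → ℝ} {a b β : ℝ} (hβ : 0 ≤ β) (hf : BddAbove (holderSet f a b β))
    {t : ℝ} (ht : t ∈ Icc a b) : |f t| ≤ supNorm f a b := by
  refine le_csSup ⟨|f a| + holderNorm f a b β * (b - a) ^ β, ?_⟩ (mem_image_of_mem _ ht)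
  rintro _ ⟨r, hr, rfl⟩
  have hra := sub_nonneg.mpr hr.1
  calc |f r| ≤ |f a| + |f r - f a| := by linarith [abs_sub_abs_le_abs_sub (f r) (f a)]
    _ ≤ |f a| + holderNorm f a b β * (r - a) ^ β := by
      gcongr; exact abs_sub_le_holderNorm_mul hf le_rfl hr.1 hr.2
    _ ≤ |f a| + holderNorm f a b β * (b - a) ^ β := by
      have := holderNorm_nonneg f a b β
      gcongr; exact hr.2

lemma supNorm_nonneg (f : ℝ → ℝ) (a b : ℝ) : 0 ≤ supNorm f a b :=
  Real.sSup_nonneg (by rintro _ ⟨r, -, rfl⟩; exact abs_nonneg _)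

lemma integral_rpow_sub_left {c d p : ℝ} (hp : -1 < p) :
    ∫ s in c..d, (d - s) ^ p = (d - c) ^ (p + 1) / (p + 1) := by
  rw [intervalIntegral.integral_comp_sub_left (fun x => x ^ p), sub_self,
    integral_rpow (Or.inl hp), Real.zero_rpow (by linarith), sub_zero]

lemma integral_rpow_sub_right {c d p : ℝ} (hp : -1 < p) :
    ∫ s in c..d, (s - c) ^ p = (d - c) ^ (p + 1) / (p + 1) := by
  rw [intervalIntegral.integral_comp_sub_right (fun x => x ^ p), sub_self,
    integral_rpow (Or.inl hp), Real.zero_rpow (by linarith), sub_zero]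

lemma intervalIntegrable_rpow_sub_left {c d p : ℝ} (hp : -1 < p) :
    IntervalIntegrable (fun s => (d - s) ^ p) volume c d := by
  simpa using
    ((intervalIntegral.intervalIntegrable_rpow' (a := d - d) (b := d - c) hp).comp_sub_left d).symm

lemma intervalIntegrable_rpow_sub_right {c d p : ℝ} (hp : -1 < p) :
    IntervalIntegrable (fun s => (s - c) ^ p) volume c d := by
  simpa using
    (intervalIntegral.intervalIntegrable_rpow' (a := c - c) (b := d - c) hp).comp_sub_right c

lemma betaFn_comm (x y : ℝ) : betaFn x y = betaFn y x := by
  rw [betaFn, betaFn, add_comm, mul_comm]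

lemma betaFn_pos {x y : ℝ} (hx : 0 < x) (hy : 0 < y) : 0 < betaFn x y := by
  have := Real.Gamma_pos_of_pos hx
  have := Real.Gamma_pos_of_pos hy
  have := Real.Gamma_pos_of_pos (add_pos hx hy)
  unfold betaFn; positivity

lemma ofReal_betaFn {x y : ℝ} (hx : 0 < x) (hy : 0 < y) :
    (betaFn x y : ℂ) = Complex.betaIntegral x y := by
  have hΓ : (Real.Gamma (x + y) : ℂ) ≠ 0 :=
    Complex.ofReal_ne_zero.mpr (Real.Gamma_pos_of_pos (add_pos hx hy)).ne'
  have h := Complex.Gamma_mul_Gamma_eq_betaIntegral (s := x) (t := y)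
    (by simpa using hx) (by simpa using hy)
  rw [← Complex.ofReal_add, Complex.Gamma_ofReal, Complex.Gamma_ofReal,
    Complex.Gamma_ofReal] at h
  rw [betaFn, Complex.ofReal_div, Complex.ofReal_mul, h, mul_div_cancel_left₀ _ hΓ]

lemma integral_rpow_mul_sub_rpow {c p q : ℝ} (hp : -1 < p) (hq : -1 < q) (hc : 0 < c) :
    ∫ x in (0 : ℝ)..c, x ^ p * (c - x) ^ q = c ^ (p + q + 1) * betaFn (p + 1) (q + 1) := by
  have h := Complex.betaIntegral_scaled (p + 1 : ℝ) (q + 1 : ℝ) hc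
  rw [← ofReal_betaFn (by linarith) (by linarith)] at h
  apply Complex.ofReal_injective
  rw [← intervalIntegral.integral_ofReal, Complex.ofReal_mul, Complex.ofReal_cpow hc.le]
  refine Eq.trans ?_ (h.trans ?_)
  · refine intervalIntegral.integral_congr fun x hx => ?_
    rw [uIcc_of_le hc.le] at hx
    simp only [Complex.ofReal_mul, Complex.ofReal_cpow hx.1,
      Complex.ofReal_cpow (sub_nonneg.mpr hx.2)]
    push_cast
    ring_nf
  · push_cast
    ring_nf

lemma integral_rpow_sub_mul_rpow_sub {a b p q : ℝ} (hp : -1 < p) (hq : -1 < q) (hab : a < b) :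
    ∫ t in a..b, (t - a) ^ p * (b - t) ^ q = (b - a) ^ (p + q + 1) * betaFn (p + 1) (q + 1) := by
  have h := intervalIntegral.integral_comp_sub_right (a := a) (b := b)
    (fun x => x ^ p * (b - a - x) ^ q) a
  simp only [sub_self, sub_sub_sub_cancel_right] at h
  rw [h, integral_rpow_mul_sub_rpow hp hq (sub_pos.mpr hab)]

lemma intervalIntegrable_rpow_sub_mul_rpow_sub {a b p q : ℝ} (hp : -1 < p) (hq : -1 < q)
    (hab : a < b) :
    IntervalIntegrable (fun t => (t - a) ^ p * (b - t) ^ q) volume a b := by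
  -- a non-integrable function has integral `0`, but this Beta integral is positive
  by_contra h
  have hpos : 0 < (b - a) ^ (p + q + 1) * betaFn (p + 1) (q + 1) :=
    mul_pos (Real.rpow_pos_of_pos (sub_pos.mpr hab) _) (betaFn_pos (by linarith) (by linarith))
  rw [← integral_rpow_sub_mul_rpow_sub hp hq hab, intervalIntegral.integral_undef h] at hpos
  exact hpos.false

lemma abs_Dplus_le {f : ℝ → ℝ} {a α β K M t : ℝ} (hα0 : 0 ≤ α) (hα1 : α < 1) (hαβ : α < β)
    (hK : ∀ r s, a ≤ r → r ≤ s → s ≤ t → |f s - f r| ≤ K * (s - r) ^ β) (hM : |f t| ≤ M)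
    (hat : a ≤ t) :
    |Dplus f a α t| ≤
      (M * (t - a) ^ (-α) + α * K / (β - α) * (t - a) ^ (β - α)) / Real.Gamma (1 - α) := by
  have hΓ : 0 < Real.Gamma (1 - α) := Real.Gamma_pos_of_pos (by linarith)
  have hint : |∫ s in a..t, (f t - f s) * (t - s) ^ (-α - 1)| ≤
      K * (t - a) ^ (β - α) / (β - α) := by
    calc |∫ s in a..t, (f t - f s) * (t - s) ^ (-α - 1)|
        ≤ ∫ s in a..t, K * (t - s) ^ (β + (-α - 1)) := by
          rw [← Real.norm_eq_abs]
          refine intervalIntegral.norm_integral_le_of_norm_le hat ?_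
            ((intervalIntegrable_rpow_sub_left (by linarith)).const_mul K)
          filter_upwards [Measure.ae_ne volume t] with s hst hs
          have hts : 0 < t - s := sub_pos.mpr (lt_of_le_of_ne hs.2 hst)
          rw [Real.norm_eq_abs, abs_mul, abs_of_pos (Real.rpow_pos_of_pos hts _),
            Real.rpow_add hts, ← mul_assoc]
          exact mul_le_mul_of_nonneg_right (hK s t hs.1.le hs.2 le_rfl)
            (Real.rpow_nonneg hts.le _)
      _ = K * (t - a) ^ (β - α) / (β - α) := by
          rw [intervalIntegral.integral_const_mul, integral_rpow_sub_left (by linarith),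
            show β + (-α - 1) + 1 = β - α by ring, mul_div_assoc]
  have hta : 0 ≤ (t - a) ^ (-α) := Real.rpow_nonneg (sub_nonneg.mpr hat) _
  rw [Dplus, abs_mul, one_div, abs_inv, abs_of_pos hΓ, inv_mul_eq_div]
  gcongr
  calc |f t * (t - a) ^ (-α) + α * ∫ s in a..t, (f t - f s) * (t - s) ^ (-α - 1)|
      ≤ |f t| * (t - a) ^ (-α) + α * |∫ s in a..t, (f t - f s) * (t - s) ^ (-α - 1)| := by
        refine (abs_add_le _ _).trans_eq ?_
        rw [abs_mul, abs_mul, abs_of_nonneg hα0, abs_of_nonneg hta]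
    _ ≤ M * (t - a) ^ (-α) + α * (K * (t - a) ^ (β - α) / (β - α)) := by gcongr
    _ = M * (t - a) ^ (-α) + α * K / (β - α) * (t - a) ^ (β - α) := by ring

lemma abs_Dminus_le {g : ℝ → ℝ} {b α β K t : ℝ} (hα0 : 0 < α) (hα1 : α ≤ 1) (hαβ : 1 < α + β)
    (hK : ∀ r s, t ≤ r → r ≤ s → s ≤ b → |g s - g r| ≤ K * (s - r) ^ β) (htb : t ≤ b) :
    |Dminus g b α t| ≤ β * K / ((α + β - 1) * Real.Gamma α) * (b - t) ^ (α + β - 1) := by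
  have hΓ : 0 < Real.Gamma α := Real.Gamma_pos_of_pos hα0
  have hbt : 0 ≤ b - t := sub_nonneg.mpr htb
  have hαβ' : 0 < α + β - 1 := by linarith
  have hend : |(g t - g b) * (b - t) ^ (α - 1)| ≤ K * (b - t) ^ (α + β - 1) := by
    rw [abs_mul, abs_of_nonneg (Real.rpow_nonneg hbt _), abs_sub_comm,
      show α + β - 1 = β + (α - 1) by ring, Real.rpow_add' hbt (by linarith), ← mul_assoc]
    exact mul_le_mul_of_nonneg_right (hK t b le_rfl htb le_rfl) (Real.rpow_nonneg hbt _)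
  have hint : |∫ s in t..b, (g t - g s) * (s - t) ^ (α - 2)| ≤
      K * (b - t) ^ (α + β - 1) / (α + β - 1) := by
    calc |∫ s in t..b, (g t - g s) * (s - t) ^ (α - 2)|
        ≤ ∫ s in t..b, K * (s - t) ^ (β + (α - 2)) := by
          rw [← Real.norm_eq_abs]
          refine intervalIntegral.norm_integral_le_of_norm_le htb ?_
            ((intervalIntegrable_rpow_sub_right (by linarith)).const_mul K)
          filter_upwards with s hs
          have hst : 0 < s - t := sub_pos.mpr hs.1
          rw [Real.norm_eq_abs, abs_mul, abs_of_pos (Real.rpow_pos_of_pos hst _),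
            Real.rpow_add hst, ← mul_assoc, abs_sub_comm]
          exact mul_le_mul_of_nonneg_right (hK t s le_rfl hs.1.le hs.2)
            (Real.rpow_nonneg hst.le _)
      _ = K * (b - t) ^ (α + β - 1) / (α + β - 1) := by
          rw [intervalIntegral.integral_const_mul, integral_rpow_sub_right (by linarith),
            show β + (α - 2) + 1 = α + β - 1 by ring, mul_div_assoc]
  rw [Dminus, abs_mul, one_div, abs_inv, abs_of_pos hΓ]
  calc (Real.Gamma α)⁻¹ * |(g t - g b) * (b - t) ^ (α - 1) +
        (1 - α) * ∫ s in t..b, (g t - g s) * (s - t) ^ (α - 2)|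
      ≤ (Real.Gamma α)⁻¹ * (K * (b - t) ^ (α + β - 1) +
        (1 - α) * (K * (b - t) ^ (α + β - 1) / (α + β - 1))) := by
        gcongr
        refine (abs_add_le _ _).trans ?_
        rw [abs_mul (1 - α), abs_of_nonneg (sub_nonneg.mpr hα1)]
        gcongr
    _ = β * K / ((α + β - 1) * Real.Gamma α) * (b - t) ^ (α + β - 1) := by
        field_simp
        ring

noncomputable def kConstSup (α β : ℝ) : ℝ :=
  β * betaFn (α + β) (1 - α) / ((α + β - 1) * Real.Gamma α * Real.Gamma (1 - α))

noncomputable def kConstHolder (α β : ℝ) : ℝ :=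
  α * β * betaFn (α + β) (1 + β - α) /
    ((α + β - 1) * (β - α) * Real.Gamma α * Real.Gamma (1 - α))

lemma kConst_eq_add (α β : ℝ) : kConst α β = kConstSup α β + kConstHolder α β := rfl

lemma kConstSup_nonneg {α β : ℝ} (hα0 : 0 < α) (hα1 : α < 1) (hαβ : 1 < α + β) :
    0 ≤ kConstSup α β := by
  have := Real.Gamma_pos_of_pos hα0
  have := Real.Gamma_pos_of_pos (sub_pos.mpr hα1)
  have := betaFn_pos (x := α + β) (y := 1 - α) (by linarith) (by linarith)
  have : 0 < α + β - 1 := by linarith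
  have : 0 < β := by linarith
  unfold kConstSup; positivity

lemma kConstHolder_nonneg {α β : ℝ} (hα0 : 0 < α) (hα1 : α < 1) (hαβ : α < β)
    (hαβ1 : 1 < α + β) : 0 ≤ kConstHolder α β := by
  have := Real.Gamma_pos_of_pos hα0
  have := Real.Gamma_pos_of_pos (sub_pos.mpr hα1)
  have := betaFn_pos (x := α + β) (y := 1 + β - α) (by linarith) (by linarith)
  have : 0 < α + β - 1 := by linarith
  have : 0 < β - α := by linarith
  have : 0 < β := by linarith
  unfold kConstHolder; positivity

lemma mul_add_le_kConst_mul {α β K x y : ℝ} (hα0 : 0 < α) (hα1 : α < 1) (hαβ : α < β)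
    (hαβ1 : 1 < α + β) (hK : 0 ≤ K) (hx : 0 ≤ x) (hy : 0 ≤ y) :
    K * (kConstSup α β * x + kConstHolder α β * y) ≤ kConst α β * K * (x + y) := by
  have hSup := kConstSup_nonneg hα0 hα1 hαβ1
  have hHolder := kConstHolder_nonneg hα0 hα1 hαβ hαβ1
  rw [kConst_eq_add]
  nlinarith [mul_nonneg hK (add_nonneg (mul_nonneg hSup hy) (mul_nonneg hHolder hx))]

lemma abs_integral_Dplus_mul_Dminus_le {f g : ℝ → ℝ} {a b α β M Kf Kg : ℝ} (hα0 : 0 < α)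
    (hα1 : α < 1) (hαβ : α < β) (hαβ1 : 1 < α + β) (hab : a < b)
    (hM : ∀ t ∈ Icc a b, |f t| ≤ M)
    (hKf : ∀ r s, a ≤ r → r ≤ s → s ≤ b → |f s - f r| ≤ Kf * (s - r) ^ β)
    (hKg : ∀ r s, a ≤ r → r ≤ s → s ≤ b → |g s - g r| ≤ Kg * (s - r) ^ β) :
    |∫ t in a..b, Dplus f a α t * Dminus g b α t| ≤
      Kg * (kConstSup α β * (M * (b - a) ^ β) + kConstHolder α β * (Kf * (b - a) ^ (2 * β))) := by
  have hΓ := Real.Gamma_pos_of_pos hα0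
  have hΓ' := Real.Gamma_pos_of_pos (sub_pos.mpr hα1)
  have hαβ' : 0 < α + β - 1 := by linarith
  have hβα : 0 < β - α := by linarith
  have hP₁ := intervalIntegrable_rpow_sub_mul_rpow_sub (p := -α) (q := α + β - 1)
    (by linarith) (by linarith) hab
  have hP₂ := intervalIntegrable_rpow_sub_mul_rpow_sub (p := β - α) (q := α + β - 1)
    (by linarith) (by linarith) hab
  calc |∫ t in a..b, Dplus f a α t * Dminus g b α t|
      ≤ ∫ t in a..b, Kg * β / ((α + β - 1) * Real.Gamma α * Real.Gamma (1 - α)) *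
          (M * ((t - a) ^ (-α) * (b - t) ^ (α + β - 1)) +
            α * Kf / (β - α) * ((t - a) ^ (β - α) * (b - t) ^ (α + β - 1))) := by
        rw [← Real.norm_eq_abs]
        refine intervalIntegral.norm_integral_le_of_norm_le hab.le ?_
          (((hP₁.const_mul M).add (hP₂.const_mul _)).const_mul _)
        filter_upwards with t ht
        have hDplus := abs_Dplus_le hα0.le hα1 hαβ
          (fun r s hr hrs hs => hKf r s hr hrs (hs.trans ht.2)) (hM t ⟨ht.1.le, ht.2⟩) ht.1.le
        have hDminus := abs_Dminus_le hα0 hα1.le hαβ1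
          (fun r s hr hrs hs => hKg r s (ht.1.le.trans hr) hrs hs) ht.2
        rw [Real.norm_eq_abs, abs_mul]
        refine (mul_le_mul hDplus hDminus (abs_nonneg _) ((abs_nonneg _).trans hDplus)).trans_eq ?_
        field_simp
    _ = Kg * (kConstSup α β * (M * (b - a) ^ β) +
          kConstHolder α β * (Kf * (b - a) ^ (2 * β))) := by
        rw [intervalIntegral.integral_const_mul,
          intervalIntegral.integral_add (hP₁.const_mul M) (hP₂.const_mul _),
          intervalIntegral.integral_const_mul, intervalIntegral.integral_const_mul,
          integral_rpow_sub_mul_rpow_sub (by linarith) (by linarith) hab,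
          integral_rpow_sub_mul_rpow_sub (by linarith) (by linarith) hab,
          show -α + (α + β - 1) + 1 = β by ring, show β - α + (α + β - 1) + 1 = 2 * β by ring,
          show -α + 1 = 1 - α by ring, show β - α + 1 = 1 + β - α by ring,
          show α + β - 1 + 1 = α + β by ring, betaFn_comm (1 - α), betaFn_comm (1 + β - α),
          kConstSup, kConstHolder]
        field_simp

theorem young_integral_estimate_general (α β T a b : ℝ) (f g : ℝ → ℝ)
    (hα0 : 0 < α) (hα : α < 1 / 2) (hαβ : 1 < α + β)
    (ha : 0 ≤ a) (hab : a < b) (hbT : b ≤ T)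
    (hf : BddAbove (holderSet f 0 T β)) (hg : BddAbove (holderSet g 0 T β)) :
    |∫ t in a..b, Dplus f a α t * Dminus g b α t| ≤
      kConst α β * holderNorm g 0 T β *
        (supNorm f a b * (b - a) ^ β + holderNorm f a b β * (b - a) ^ (2 * β)) := by
  have hα1 : α < 1 := by linarith
  have hβα : α < β := by linarith
  have hba : 0 ≤ b - a := sub_nonneg.mpr hab.le
  have hfab : BddAbove (holderSet f a b β) := hf.mono (holderSet_mono ha hbT)
  have hKg (r s : ℝ) (hr : a ≤ r) (hrs : r ≤ s) (hs : s ≤ b) :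
      |g s - g r| ≤ holderNorm g 0 T β * (s - r) ^ β :=
    abs_sub_le_holderNorm_mul hg (ha.trans hr) hrs (hs.trans hbT)
  refine (abs_integral_Dplus_mul_Dminus_le hα0 hα1 hβα hαβ hab
    (fun t ht => abs_le_supNorm (by linarith) hfab ht)
    (fun r s => abs_sub_le_holderNorm_mul hfab) hKg).trans ?_
  exact mul_add_le_kConst_mul hα0 hα1 hβα hαβ (holderNorm_nonneg g 0 T β)
    (mul_nonneg (supNorm_nonneg f a b) (Real.rpow_nonneg hba _))
    (mul_nonneg (holderNorm_nonneg f a b β) (Real.rpow_nonneg hba _))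

/-- Lemma 4.1 (estimate of Young's integral in Zähle's fractional representation). -/
theorem young_integral_estimate (α β T a b : ℝ) (f g : ℝ → ℝ)
    (hα0 : 0 < α) (hα : α < 1 / 2) (hβ1 : 1 / 2 < β) (hβ : β < 1) (hαβ : 1 < α + β)
    (hT : 0 < T) (ha : 0 ≤ a) (hab : a < b) (hbT : b ≤ T)
    (hf : BddAbove (holderSet f 0 T β)) (hg : BddAbove (holderSet g 0 T β)) :
    |∫ t in a..b, Dplus f a α t * Dminus g b α t| ≤
      kConst α β * holderNorm g 0 T β *
        (supNorm f a b * (b - a) ^ β + holderNorm f a b β * (b - a) ^ (2 * β)) :=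
  young_integral_estimate_general α β T a b f g hα0 hα hαβ ha hab hbT hf hg
end

section
/- Let (Ω, ℱ, P) be a probability space, (E, ℰ) a measurable space, X : Ω → E a measurable map, and let ν := P ∘ X^{−1} be the law of X. Let Q be a probability measure on (E, ℰ) with Q ≪ ν, and let f := dQ/dν be its Radon–Nikodym derivative. Define the measure Q̃ on (Ω, ℱ) by dQ̃ := f(X) dP (i.e., Q̃ = P.withDensity (f ∘ X)). Then Q̃ is a probability measure and the Kullback–Leibler divergences satisfy H(Q̃ | P) = H(Q | ν), where H(μ | λ) := ∫ log(dμ/dλ) dμ if μ ≪ λ and +∞ otherwise. -/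
/-! Since `Q̃` has density `f ∘ X` with respect to `P`, its image under `X` is `f · ν = Q`, and
its log-likelihood ratio is `log f(X) = (log dQ/dν) ∘ X`. The relative entropy `H(Q̃|P)` is
therefore the integral of `log dQ/dν` against the image of `Q̃` under `X`, which is `H(Q|ν)`. -/

open MeasureTheory
open scoped Classical

/-- Relative entropy (Kullback–Leibler divergence): `H(μ|ν) = ∫ log(dμ/dν) dμ` if `μ ≪ ν`
(with value `+∞` if the integral diverges), and `+∞` otherwise. -/
noncomputable def relEntropy {α : Type*} [MeasurableSpace α] (μ ν : Measure α) : EReal :=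
  if μ ≪ ν ∧ Integrable (llr μ ν) μ then ((∫ x, llr μ ν x ∂μ : ℝ) : EReal) else ⊤

namespace MeasureTheory

open scoped ENNReal

variable {Ω E : Type*} [MeasurableSpace Ω] [MeasurableSpace E] {X : Ω → E}

lemma map_withDensity_comp (P : Measure Ω) (hX : Measurable X) {f : E → ℝ≥0∞}
    (hf : Measurable f) : (P.withDensity (f ∘ X)).map X = (P.map X).withDensity f := by
  ext s hs
  rw [Measure.map_apply hX hs, withDensity_apply _ (hX hs), withDensity_apply _ hs,
    setLIntegral_map hs hf hX, Function.comp_def]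

lemma map_withDensity_rnDeriv_comp (P : Measure Ω) (hX : Measurable X) (Q : Measure E)
    [Q.HaveLebesgueDecomposition (P.map X)] (hQ : Q ≪ P.map X) :
    (P.withDensity fun ω ↦ Q.rnDeriv (P.map X) (X ω)).map X = Q := by
  rw [← Function.comp_def, map_withDensity_comp P hX (Measure.measurable_rnDeriv _ _),
    Measure.withDensity_rnDeriv_eq Q _ hQ]

lemma llr_withDensity (P : Measure Ω) [SigmaFinite P] {g : Ω → ℝ≥0∞} (hg : Measurable g) :
    llr (P.withDensity g) P =ᵐ[P] fun ω ↦ Real.log (g ω).toReal := by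
  filter_upwards [Measure.rnDeriv_withDensity P hg] with ω hω
  rw [llr, hω]

lemma relEntropy_eq_of_map_eq {μ P : Measure Ω} {Q ν : Measure E} (hX : Measurable X)
    (hμP : μ ≪ P) (hQν : Q ≪ ν) (hmap : μ.map X = Q) (hllr : llr μ P =ᵐ[μ] llr Q ν ∘ X) :
    relEntropy μ P = relEntropy Q ν := by
  subst hmap
  have hmeas : AEStronglyMeasurable (llr (μ.map X) ν) (μ.map X) :=
    (measurable_llr _ ν).aestronglyMeasurable
  have hint : Integrable (llr μ P) μ ↔ Integrable (llr (μ.map X) ν) (μ.map X) := by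
    rw [integrable_congr hllr, integrable_map_measure hmeas hX.aemeasurable]
  have hintegral : ∫ ω, llr μ P ω ∂μ = ∫ x, llr (μ.map X) ν x ∂(μ.map X) := by
    rw [integral_congr_ae hllr, integral_map hX.aemeasurable hmeas, Function.comp_def]
  simp only [relEntropy, hμP, hQν, true_and, hint, hintegral]

end MeasureTheory

/-- The entropy-transfer identity used in the proof of Theorem 2.3: if `ν = P ∘ X⁻¹` is the
law of `X`, `Q ≪ ν` with density `f = dQ/dν`, and `dQ̃ = f(X) dP`, then `Q̃` is a probability
measure and `H(Q̃|P) = H(Q|ν)`. -/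
theorem relEntropy_withDensity_comp {Ω E : Type*} [MeasurableSpace Ω] [MeasurableSpace E]
    (P : Measure Ω) [IsProbabilityMeasure P] (X : Ω → E) (hX : Measurable X)
    (Q : Measure E) [IsProbabilityMeasure Q] (hQ : Q ≪ P.map X) :
    IsProbabilityMeasure (P.withDensity (fun ω => Q.rnDeriv (P.map X) (X ω))) ∧
      relEntropy (P.withDensity (fun ω => Q.rnDeriv (P.map X) (X ω))) P =
        relEntropy Q (P.map X) := by
  have hmap := map_withDensity_rnDeriv_comp P hX Q hQ
  have hac : P.withDensity (fun ω => Q.rnDeriv (P.map X) (X ω)) ≪ P :=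
    withDensity_absolutelyContinuous _ _
  refine ⟨(Measure.isProbabilityMeasure_map_iff hX.aemeasurable).1
    (by rw [hmap]; infer_instance), ?_⟩
  exact relEntropy_eq_of_map_eq hX hac hQ hmap
    (hac.ae_le (llr_withDensity P ((Measure.measurable_rnDeriv _ _).comp hX)))
end

section
/- Let 0 < σ₁ ≤ σ₂, L_σ ≥ 0, L_b ≥ 0, B̄ ≥ 0. Let σ : ℝ → ℝ satisfy σ₁ ≤ σ(z) ≤ σ₂ and |σ(z)−σ(z')| ≤ L_σ |z−z'| for all z, z', and let b : ℝ → ℝ satisfy |b(z)| ≤ B̄ and |b(z)−b(z')| ≤ L_b |z−z'| for all z, z'. Define F : ℝ → ℝ by F(y) := ∫_0^y dz/σ(z); F is a strictly increasing bijection of ℝ. Then the function b̃ := (b/σ) ∘ F^{−1} is Lipschitz with constant σ₂ (L_b σ₂ + L_σ B̄) / σ₁², i.e., for all x, y ∈ ℝ, | b(F^{−1}(x))/σ(F^{−1}(x)) − b(F^{−1}(y))/σ(F^{−1}(y)) | ≤ ( σ₂ (L_b σ₂ + L_σ B̄) / σ₁² ) · |x − y|. -/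
/-!
Since `σ ≤ σ₂`, the Lamperti transform grows at least like `y / σ₂`: `F(c) - F(a) ≥ (c - a)/σ₂`
for `a ≤ c`. Hence `F` is a strictly increasing continuous bijection whose inverse is
`σ₂`-Lipschitz. On the other hand `b/σ` is Lipschitz with constant `(L_b σ₂ + L_σ B̄)/σ₁²`,
by writing `b u σ v - b v σ u = (b u - b v) σ v + b v (σ v - σ u)` and `σ u σ v ≥ σ₁²`.
Composing the two bounds gives the claim.
-/

open MeasureTheory intervalIntegral

/-- The Lamperti transform `F(y) = ∫_0^y dz/σ(z)`. -/
noncomputable def lamperti (σ : ℝ → ℝ) (y : ℝ) : ℝ :=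
  ∫ z in (0 : ℝ)..y, 1 / σ z

open Filter

section GrowthBound

variable {f : ℝ → ℝ} {K : ℝ}

theorem strictMono_of_div_le_sub (hK : 0 < K) (hf : ∀ a c, a ≤ c → (c - a) / K ≤ f c - f a) :
    StrictMono f := fun a c hac => by
  have := div_pos (sub_pos.2 hac) hK
  linarith [hf a c hac.le]

theorem abs_sub_le_mul_abs_sub_of_div_le_sub (hK : 0 < K)
    (hf : ∀ a c, a ≤ c → (c - a) / K ≤ f c - f a) (a c : ℝ) : |a - c| ≤ K * |f a - f c| := by
  wlog hca : c ≤ a generalizing a c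
  · rw [abs_sub_comm, abs_sub_comm (f a)]
    exact this c a (le_of_not_ge hca)
  rw [abs_of_nonneg (sub_nonneg.2 hca), ← div_le_iff₀' hK]
  exact (hf c a hca).trans (le_abs_self _)

theorem surjective_of_div_le_sub (hK : 0 < K) (hcont : Continuous f)
    (hf : ∀ a c, a ≤ c → (c - a) / K ≤ f c - f a) : Function.Surjective f := by
  refine hcont.surjective ?_ ?_
  · refine tendsto_atTop_mono' _ ?_ (tendsto_atTop_add_const_left _ (f 0)
      (tendsto_id.atTop_div_const hK))
    filter_upwards [eventually_ge_atTop 0] with c hc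
    have := hf 0 c hc
    rw [sub_zero] at this
    dsimp only [id]
    linarith
  · refine tendsto_atBot_mono' _ ?_ (tendsto_atBot_add_const_left _ (f 0)
      (tendsto_id.atBot_div_const hK))
    filter_upwards [eventually_le_atBot 0] with c hc
    have := hf c 0 hc
    rw [zero_sub, neg_div] at this
    dsimp only [id]
    linarith

theorem abs_invFun_sub_le (hK : 0 < K) (hsurj : Function.Surjective f)
    (hf : ∀ a c, a ≤ c → (c - a) / K ≤ f c - f a) (x y : ℝ) :
    |Function.invFun f x - Function.invFun f y| ≤ K * |x - y| := by
  simpa only [Function.rightInverse_invFun hsurj _] using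
    abs_sub_le_mul_abs_sub_of_div_le_sub hK hf (Function.invFun f x) (Function.invFun f y)

end GrowthBound

section Lamperti

variable {σ : ℝ → ℝ}

theorem intervalIntegrable_one_div (hσ : Continuous σ) (hne : ∀ z, σ z ≠ 0) (a c : ℝ) :
    IntervalIntegrable (fun z => 1 / σ z) volume a c :=
  (continuous_const.div hσ hne).intervalIntegrable a c

theorem continuous_lamperti (hσ : Continuous σ) (hne : ∀ z, σ z ≠ 0) :
    Continuous (lamperti σ) :=
  continuous_primitive (intervalIntegrable_one_div hσ hne) 0

theorem div_le_lamperti_sub {σ₂ : ℝ} (hσ : Continuous σ) (hpos : ∀ z, 0 < σ z)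
    (hle : ∀ z, σ z ≤ σ₂) (a c : ℝ) (hac : a ≤ c) :
    (c - a) / σ₂ ≤ lamperti σ c - lamperti σ a := by
  have hint := intervalIntegrable_one_div hσ fun z => (hpos z).ne'
  rw [lamperti, lamperti, integral_interval_sub_left (hint 0 c) (hint 0 a), div_eq_mul_one_div,
    ← smul_eq_mul, ← intervalIntegral.integral_const]
  exact integral_mono_on hac intervalIntegrable_const (hint a c) fun z _ =>
    one_div_le_one_div_of_le (hpos z) (hle z)

end Lamperti

theorem abs_div_sub_div_le {b σ : ℝ → ℝ} {σ₁ σ₂ Lσ Lb B : ℝ} (hσ₁ : 0 < σ₁)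
    (hσbd : ∀ z, σ₁ ≤ σ z ∧ σ z ≤ σ₂) (hσlip : ∀ z z', |σ z - σ z'| ≤ Lσ * |z - z'|)
    (hbbd : ∀ z, |b z| ≤ B) (hblip : ∀ z z', |b z - b z'| ≤ Lb * |z - z'|) (u v : ℝ) :
    |b u / σ u - b v / σ v| ≤ (Lb * σ₂ + Lσ * B) / σ₁ ^ 2 * |u - v| := by
  have hσu : 0 < σ u := hσ₁.trans_le (hσbd u).1
  have hσv : 0 < σ v := hσ₁.trans_le (hσbd v).1
  have hnum : |b u * σ v - b v * σ u| ≤ (Lb * σ₂ + Lσ * B) * |u - v| :=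
    calc |b u * σ v - b v * σ u| = |(b u - b v) * σ v + b v * (σ v - σ u)| := by ring_nf
      _ ≤ |b u - b v| * |σ v| + |b v| * |σ v - σ u| := by
          rw [← abs_mul, ← abs_mul]; exact abs_add_le _ _
      _ ≤ Lb * |u - v| * σ₂ + B * (Lσ * |v - u|) := by
          rw [abs_of_pos hσv]
          exact add_le_add
            (mul_le_mul (hblip u v) (hσbd v).2 hσv.le ((abs_nonneg _).trans (hblip u v)))
            (mul_le_mul (hbbd v) (hσlip v u) (abs_nonneg _) ((abs_nonneg _).trans (hbbd v)))
      _ = (Lb * σ₂ + Lσ * B) * |u - v| := by rw [abs_sub_comm v u]; ring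
  have hden : σ₁ ^ 2 ≤ σ u * σ v := by
    rw [sq]; exact mul_le_mul (hσbd u).1 (hσbd v).1 hσ₁.le hσu.le
  rw [div_sub_div _ _ hσu.ne' hσv.ne', abs_div, abs_of_pos (mul_pos hσu hσv), mul_comm (σ u),
    div_mul_eq_mul_div]
  exact div_le_div₀ ((abs_nonneg _).trans hnum) hnum (by positivity) hden

/-- The drift `b̃ = (b/σ) ∘ F⁻¹` of the Lamperti-transformed equation is Lipschitz with
constant `σ₂ (L_b σ₂ + L_σ B̄)/σ₁²`. -/
theorem lamperti_drift_lipschitz (σ₁ σ₂ Lσ Lb Bbar : ℝ) (σ b : ℝ → ℝ)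
    (hσ₁ : 0 < σ₁) (hσ₁₂ : σ₁ ≤ σ₂) (hLσ : 0 ≤ Lσ) (hLb : 0 ≤ Lb) (hBbar : 0 ≤ Bbar)
    (hσbd : ∀ z : ℝ, σ₁ ≤ σ z ∧ σ z ≤ σ₂)
    (hσlip : ∀ z z' : ℝ, |σ z - σ z'| ≤ Lσ * |z - z'|)
    (hbbd : ∀ z : ℝ, |b z| ≤ Bbar)
    (hblip : ∀ z z' : ℝ, |b z - b z'| ≤ Lb * |z - z'|) :
    StrictMono (lamperti σ) ∧ Function.Bijective (lamperti σ) ∧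
      ∀ x y : ℝ,
        |b (Function.invFun (lamperti σ) x) / σ (Function.invFun (lamperti σ) x) -
            b (Function.invFun (lamperti σ) y) / σ (Function.invFun (lamperti σ) y)| ≤
          σ₂ * (Lb * σ₂ + Lσ * Bbar) / σ₁ ^ 2 * |x - y| := by
  have hσ₂ : 0 < σ₂ := hσ₁.trans_le hσ₁₂
  have hσpos (z : ℝ) : 0 < σ z := hσ₁.trans_le (hσbd z).1
  have hσcont : Continuous σ :=
    (LipschitzWith.of_dist_le_mul (K := ⟨Lσ, hLσ⟩) fun z z' => hσlip z z').continuous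
  have hgrowth := div_le_lamperti_sub hσcont hσpos fun z => (hσbd z).2
  have hmono := strictMono_of_div_le_sub hσ₂ hgrowth
  have hsurj := surjective_of_div_le_sub hσ₂
    (continuous_lamperti hσcont fun z => (hσpos z).ne') hgrowth
  refine ⟨hmono, ⟨hmono.injective, hsurj⟩, fun x y => ?_⟩
  calc _ ≤ (Lb * σ₂ + Lσ * Bbar) / σ₁ ^ 2 *
        |Function.invFun (lamperti σ) x - Function.invFun (lamperti σ) y| :=
        abs_div_sub_div_le hσ₁ hσbd hσlip hbbd hblip _ _
    _ ≤ (Lb * σ₂ + Lσ * Bbar) / σ₁ ^ 2 * (σ₂ * |x - y|) := by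
        gcongr; exact abs_invFun_sub_le hσ₂ hsurj hgrowth x y
    _ = σ₂ * (Lb * σ₂ + Lσ * Bbar) / σ₁ ^ 2 * |x - y| := by ring
end

section
/- Let 0 < σ₁ ≤ σ₂ and B ∈ ℝ. Let b, σ : ℝ → ℝ be differentiable with σ₁ ≤ σ(z) ≤ σ₂ for all z, and suppose b'(z)σ(z) − σ'(z)b(z) ≤ B for all z ∈ ℝ. Define F : ℝ → ℝ by F(y) := ∫_0^y dz/σ(z), a strictly increasing bijection of ℝ, and b̃ := (b/σ) ∘ F^{−1}. Then for all x, y ∈ ℝ, (x − y) · ( b̃(x) − b̃(y) ) ≤ max( B/σ₁, B/σ₂ ) · (x − y)². In particular, if B ≥ 0 the one-sided Lipschitz constant is B/σ₁, and if B < 0 it is B/σ₂. -/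
/-!
Write `F = lamperti σ` and `M = max (B/σ₁) (B/σ₂)`; then `B ≤ M σ(z)` for every `z` whatever the
sign of `B`. Since `F' = 1/σ` and `(b/σ)' = (b'σ - σ'b)/σ² ≤ B/σ²`, the function `M F - b/σ` has
nonnegative derivative, so it is nondecreasing. As `F' ≥ 1/σ₂ > 0`, `F` is an increasing bijection
of `ℝ`; composing with `F⁻¹` shows that `x ↦ M x - b̃(x)` is nondecreasing, which is the
one-sided Lipschitz bound.
-/

open MeasureTheory intervalIntegral

open Filter Function

theorem mul_sub_le_mul_sq_of_monotone_mul_sub {g : ℝ → ℝ} {M : ℝ}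
    (hg : Monotone fun x => M * x - g x) (x y : ℝ) :
    (x - y) * (g x - g y) ≤ M * (x - y) ^ 2 := by
  have key : ∀ x y, y ≤ x → (x - y) * (g x - g y) ≤ M * (x - y) ^ 2 := by
    intro x y hxy
    have h := hg hxy
    simp only at h
    nlinarith [mul_le_mul_of_nonneg_left h (sub_nonneg.mpr hxy)]
  rcases le_total y x with hxy | hyx
  · exact key x y hxy
  · convert key y x hyx using 1 <;> ring

theorem div_le_max_div_of_mem_Icc {B a b s : ℝ} (ha : 0 < a) (hs : s ∈ Set.Icc a b) :
    B / s ≤ max (B / a) (B / b) := by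
  rcases le_total 0 B with hB | hB
  · exact (div_le_div_of_nonneg_left hB ha hs.1).trans (le_max_left _ _)
  · refine le_trans ?_ (le_max_right _ _)
    have hb : 0 < b := ha.trans_le (hs.1.trans hs.2)
    rw [div_le_div_iff₀ (ha.trans_le hs.1) hb]
    nlinarith [hs.2]

theorem surjective_of_le_deriv {f : ℝ → ℝ} {c : ℝ} (hc : 0 < c) (hf : Differentiable ℝ f)
    (hf' : ∀ x, c ≤ deriv f x) : Surjective f := by
  have hgrowth := mul_sub_le_image_sub_of_le_deriv hf hf'
  refine hf.continuous.surjective ?_ ?_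
  · refine tendsto_atTop_mono' _ ?_ <| tendsto_atTop_add_const_left _ (f 0)
      (tendsto_id.const_mul_atTop hc : Tendsto (c * ·) _ _)
    filter_upwards [eventually_ge_atTop 0] with x hx
    linarith [hgrowth hx]
  · refine tendsto_atBot_mono' _ ?_ <| tendsto_atBot_add_const_left _ (f 0)
      (tendsto_id.const_mul_atBot hc : Tendsto (c * ·) _ _)
    filter_upwards [eventually_le_atBot 0] with x hx
    linarith [hgrowth hx]

theorem StrictMono.monotone_mul_sub_comp_rightInverse {F G h : ℝ → ℝ} {M : ℝ} (hF : StrictMono F)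
    (hFG : RightInverse G F) (hmono : Monotone fun w => M * F w - h w) :
    Monotone fun x => M * x - h (G x) := by
  have hG : Monotone G := fun x y hxy => hF.le_iff_le.mp (by rwa [hFG x, hFG y])
  intro x y hxy
  simpa only [hFG x, hFG y] using hmono (hG hxy)

section Lamperti

variable {σ : ℝ → ℝ}

theorem hasDerivAt_lamperti (hσ : Continuous σ) (hσ0 : ∀ z, σ z ≠ 0) (y : ℝ) :
    HasDerivAt (lamperti σ) (1 / σ y) y :=
  ((continuous_const.div hσ hσ0).integral_hasStrictDerivAt 0 y).hasDerivAt

theorem lamperti_strictMono (hσ : Continuous σ) (hσpos : ∀ z, 0 < σ z) :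
    StrictMono (lamperti σ) :=
  strictMono_of_deriv_pos fun z => by
    rw [(hasDerivAt_lamperti hσ (fun z => (hσpos z).ne') z).deriv]
    exact one_div_pos.mpr (hσpos z)

theorem lamperti_surjective {σ₂ : ℝ} (hσ : Continuous σ) (hσbd : ∀ z, 0 < σ z ∧ σ z ≤ σ₂) :
    Surjective (lamperti σ) := by
  have hderiv := hasDerivAt_lamperti hσ fun z => (hσbd z).1.ne'
  refine surjective_of_le_deriv (one_div_pos.mpr ((hσbd 0).1.trans_le (hσbd 0).2))
    (fun y => (hderiv y).differentiableAt) fun z => ?_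
  rw [(hderiv z).deriv]
  exact one_div_le_one_div_of_le (hσbd z).1 (hσbd z).2

theorem monotone_mul_lamperti_sub_div {b : ℝ → ℝ} {M : ℝ} (hb : Differentiable ℝ b)
    (hσ : Differentiable ℝ σ) (hσpos : ∀ z, 0 < σ z)
    (hB : ∀ z, deriv b z * σ z - deriv σ z * b z ≤ M * σ z) :
    Monotone fun w => M * lamperti σ w - b w / σ w := by
  have hderiv : ∀ z, HasDerivAt (fun w => M * lamperti σ w - b w / σ w)
      (M * (1 / σ z) - (deriv b z * σ z - b z * deriv σ z) / σ z ^ 2) z := fun z =>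
    ((hasDerivAt_lamperti hσ.continuous (fun z => (hσpos z).ne') z).const_mul M).sub
      ((hb z).hasDerivAt.div (hσ z).hasDerivAt (hσpos z).ne')
  refine monotone_of_deriv_nonneg (fun z => (hderiv z).differentiableAt) fun z => ?_
  rw [(hderiv z).deriv]
  have hσz := hσpos z
  have hderiv_eq : M * (1 / σ z) - (deriv b z * σ z - b z * deriv σ z) / σ z ^ 2
      = (M * σ z - (deriv b z * σ z - deriv σ z * b z)) / σ z ^ 2 := by
    field_simp
  rw [hderiv_eq]
  exact div_nonneg (sub_nonneg.mpr (hB z)) (by positivity)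

end Lamperti

theorem lamperti_drift_one_sided_lipschitz_general (σ₁ σ₂ B : ℝ) (b σ : ℝ → ℝ)
    (hσ₁ : 0 < σ₁)
    (hσbd : ∀ z : ℝ, σ₁ ≤ σ z ∧ σ z ≤ σ₂)
    (hb : Differentiable ℝ b) (hσ : Differentiable ℝ σ)
    (hB : ∀ z : ℝ, deriv b z * σ z - deriv σ z * b z ≤ B) :
    ∀ x y : ℝ,
      (x - y) *
          (b (Function.invFun (lamperti σ) x) / σ (Function.invFun (lamperti σ) x) -
            b (Function.invFun (lamperti σ) y) / σ (Function.invFun (lamperti σ) y)) ≤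
        max (B / σ₁) (B / σ₂) * (x - y) ^ 2 := by
  have hσpos : ∀ z, 0 < σ z := fun z => hσ₁.trans_le (hσbd z).1
  have hBM : ∀ z, deriv b z * σ z - deriv σ z * b z ≤ max (B / σ₁) (B / σ₂) * σ z := fun z =>
    (hB z).trans ((div_le_iff₀ (hσpos z)).mp (div_le_max_div_of_mem_Icc hσ₁ (hσbd z)))
  have hsurj := lamperti_surjective hσ.continuous fun z => ⟨hσpos z, (hσbd z).2⟩
  exact mul_sub_le_mul_sq_of_monotone_mul_sub
    ((lamperti_strictMono hσ.continuous hσpos).monotone_mul_sub_comp_rightInverse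
      (rightInverse_invFun hsurj) (monotone_mul_lamperti_sub_div hb hσ hσpos hBM))

/-- One-sided Lipschitz (stability) estimate for the drift `b̃ = (b/σ) ∘ F⁻¹` of the
Lamperti-transformed equation: if `b'σ - σ'b ≤ B` then
`(x-y)(b̃(x) - b̃(y)) ≤ max(B/σ₁, B/σ₂) (x-y)²`. -/
theorem lamperti_drift_one_sided_lipschitz (σ₁ σ₂ B : ℝ) (b σ : ℝ → ℝ)
    (hσ₁ : 0 < σ₁) (hσ₁₂ : σ₁ ≤ σ₂)
    (hσbd : ∀ z : ℝ, σ₁ ≤ σ z ∧ σ z ≤ σ₂)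
    (hb : Differentiable ℝ b) (hσ : Differentiable ℝ σ)
    (hB : ∀ z : ℝ, deriv b z * σ z - deriv σ z * b z ≤ B) :
    ∀ x y : ℝ,
      (x - y) *
          (b (Function.invFun (lamperti σ) x) / σ (Function.invFun (lamperti σ) x) -
            b (Function.invFun (lamperti σ) y) / σ (Function.invFun (lamperti σ) y)) ≤
        max (B / σ₁) (B / σ₂) * (x - y) ^ 2 :=
  lamperti_drift_one_sided_lipschitz_general σ₁ σ₂ B b σ hσ₁ hσbd hb hσ hB
end

section
/- Let c ≥ 2/e be a real number. Then for every real x ≥ 1, ( c · Γ(x+1)² / Γ(2x+1) )^{1/x} ≤ c/2, with equality when x = 1. In particular, for c ≥ 1, sup_{x ≥ 1} ( c · Γ(x+1)² / Γ(2x+1) )^{1/x} = c/2, and hence the supremum over integers k ≥ 1 of ( c · (k!)² / (2k)! )^{1/k} equals c/2. -/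
/-!
Legendre's duplication formula writes `log (Γ(2x+1) / Γ(x+1)²)` as
`log Γ(x+1/2) - log Γ(x+1)` plus an affine function of `x`. That difference is convex, being the
limit of Gauss's approximants, each an affine function plus a sum of the convex functions
`log (x + m + 1) - log (x + m + 1/2)`. Since `Γ'(n+1) = n! (H_n - γ)`, the tangent line at
`x = 1` has slope `1`, whence `Γ(2x+1) ≥ 2 e^(x-1) Γ(x+1)²`. For `x ≥ 1` and `e⁻¹ ≤ c/2` this gives
`c Γ(x+1)² / Γ(2x+1) ≤ (c/2) e^(1-x) ≤ (c/2)^x`, with equality at `x = 1`.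
-/

open Real Filter Set Topology

theorem convexOn_of_tendsto {E ι : Type*} [AddCommGroup E] [Module ℝ E] {l : Filter ι} [l.NeBot]
    {s : Set E} {f : ι → E → ℝ} {g : E → ℝ} (hf : ∀ᶠ i in l, ConvexOn ℝ s (f i))
    (hg : ∀ x ∈ s, Tendsto (fun i => f i x) l (𝓝 (g x))) : ConvexOn ℝ s g := by
  obtain ⟨i, hi⟩ := hf.exists
  refine ⟨hi.1, fun x hx y hy a b ha hb hab => ?_⟩
  refine le_of_tendsto_of_tendsto (hg _ (hi.1 hx hy ha hb hab))
    (((hg x hx).const_smul a).add ((hg y hy).const_smul b)) ?_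
  filter_upwards [hf] with j hj using hj.2 hx hy ha hb hab

theorem ConvexOn.sum {E ι : Type*} [AddCommGroup E] [Module ℝ E] {s : Set E} (hs : Convex ℝ s)
    (t : Finset ι) {f : ι → E → ℝ} (hf : ∀ i ∈ t, ConvexOn ℝ s (f i)) :
    ConvexOn ℝ s fun x => ∑ i ∈ t, f i x := by
  classical
  induction t using Finset.induction_on with
  | empty => simpa using convexOn_const 0 hs
  | insert i t hi ih =>
    simp only [Finset.sum_insert hi]
    exact (hf i (t.mem_insert_self i)).add (ih fun j hj => hf j (Finset.mem_insert_of_mem hj))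

theorem convexOn_log_add_sub_log_add {c d : ℝ} (hcd : c ≤ d) :
    ConvexOn ℝ (Ioi (-c)) fun x => log (x + d) - log (x + c) := by
  have hderiv : ∀ x ∈ Ioi (-c),
      HasDerivAt (fun x => log (x + d) - log (x + c)) ((x + d)⁻¹ - (x + c)⁻¹) x := by
    intro x hx
    rw [mem_Ioi] at hx
    exact ((hasDerivAt_log (by linarith)).comp_add_const x d).sub
      ((hasDerivAt_log (by linarith)).comp_add_const x c)
  refine MonotoneOn.convexOn_of_deriv (convex_Ioi _)
    (fun x hx => (hderiv x hx).continuousAt.continuousWithinAt)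
    (fun x hx => (hderiv x (interior_subset hx)).differentiableAt.differentiableWithinAt) ?_
  rw [interior_Ioi]
  intro x hx y hy hxy
  have hform : ∀ z, -c < z → (z + d)⁻¹ - (z + c)⁻¹ = -((d - c) / ((z + c) * (z + d))) := by
    intro z hz
    have hzc : z + c ≠ 0 := by linarith
    have hzd : z + d ≠ 0 := by linarith
    field_simp
    ring
  rw [(hderiv x hx).deriv, (hderiv y hy).deriv, hform x hx, hform y hy, neg_le_neg_iff]
  rw [mem_Ioi] at hx hy
  exact div_le_div_of_nonneg_left (sub_nonneg.2 hcd) (mul_pos (by linarith) (by linarith))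
    (by gcongr <;> linarith)

theorem logGammaSeq_add_sub_logGammaSeq_add (x a b : ℝ) (n : ℕ) :
    BohrMollerup.logGammaSeq (x + a) n - BohrMollerup.logGammaSeq (x + b) n =
      (a - b) * log n + ∑ m ∈ Finset.range (n + 1), (log (x + (b + m)) - log (x + (a + m))) := by
  simp only [BohrMollerup.logGammaSeq, Finset.sum_sub_distrib, add_assoc]
  ring

theorem convexOn_log_Gamma_add_sub_log_Gamma_add {a b : ℝ} (hab : a ≤ b) :
    ConvexOn ℝ (Ioi (-a)) fun x => log (Gamma (x + a)) - log (Gamma (x + b)) := by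
  refine convexOn_of_tendsto (l := atTop)
    (f := fun n x => BohrMollerup.logGammaSeq (x + a) n - BohrMollerup.logGammaSeq (x + b) n)
    (Eventually.of_forall fun n => ?_) fun x hx => ?_
  · have hsum : ConvexOn ℝ (Ioi (-a))
        fun x => ∑ m ∈ Finset.range (n + 1), (log (x + (b + m)) - log (x + (a + m))) :=
      ConvexOn.sum (convex_Ioi _) _ fun m _ =>
        (convexOn_log_add_sub_log_add (by linarith)).subset
          (Ioi_subset_Ioi (by linarith [(Nat.cast_nonneg m : (0 : ℝ) ≤ m)])) (convex_Ioi _)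
    exact ((convexOn_const ((a - b) * log n) (convex_Ioi _)).add hsum).congr fun x _ =>
      (logGammaSeq_add_sub_logGammaSeq_add x a b n).symm
  · rw [mem_Ioi] at hx
    exact (BohrMollerup.tendsto_log_gamma (by linarith)).sub
      (BohrMollerup.tendsto_log_gamma (by linarith))

theorem log_Gamma_two_mul_add_one {x : ℝ} (hx : -(1 / 2) < x) :
    log (Gamma (2 * x + 1)) =
      log (Gamma (x + 1 / 2)) + log (Gamma (x + 1)) + 2 * log 2 * x - log √π := by
  have h := Gamma_mul_Gamma_add_half (x + 1 / 2)
  rw [show x + 1 / 2 + 1 / 2 = x + 1 by ring, show 2 * (x + 1 / 2) = 2 * x + 1 by ring,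
    show 1 - (2 * x + 1) = -(2 * x) by ring] at h
  have h1 : 0 < Gamma (x + 1 / 2) := Gamma_pos_of_pos (by linarith)
  have h2 : 0 < Gamma (x + 1) := Gamma_pos_of_pos (by linarith)
  have h3 : 0 < Gamma (2 * x + 1) := Gamma_pos_of_pos (by linarith)
  have := congrArg log h
  rw [log_mul h1.ne' h2.ne', log_mul (by positivity) (by positivity),
    log_mul h3.ne' (by positivity), log_rpow two_pos] at this
  linarith

noncomputable def logCentralBinomGamma (x : ℝ) : ℝ :=
  log (Gamma (2 * x + 1)) - 2 * log (Gamma (x + 1))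

theorem convexOn_logCentralBinomGamma : ConvexOn ℝ (Ioi (-(1 / 2))) logCentralBinomGamma := by
  have hlin : ConvexOn ℝ (Ioi (-(1 / 2))) fun x : ℝ => 2 * log 2 * x - log √π :=
    ((convexOn_id (convex_Ioi _)).smul (by positivity : (0 : ℝ) ≤ 2 * log 2)).sub
      (concaveOn_const _ (convex_Ioi _))
  refine ((convexOn_log_Gamma_add_sub_log_Gamma_add (by norm_num : (1 / 2 : ℝ) ≤ 1)).add
    hlin).congr fun x hx => ?_
  rw [logCentralBinomGamma, log_Gamma_two_mul_add_one hx, Pi.add_apply]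
  ring

theorem Gamma_three : Gamma 3 = 2 := by
  rw [show (3 : ℝ) = (2 : ℕ) + 1 by norm_num, Gamma_nat_eq_factorial]
  norm_num

theorem logCentralBinomGamma_one : logCentralBinomGamma 1 = log 2 := by
  norm_num [logCentralBinomGamma, Gamma_three]

theorem hasDerivAt_logCentralBinomGamma_one : HasDerivAt logCentralBinomGamma 1 1 := by
  have hΓ2 : HasDerivAt Gamma (-eulerMascheroniConstant + 1) (1 + 1) := by
    simpa [one_add_one_eq_two] using hasDerivAt_Gamma_nat 1
  have hΓ3 : HasDerivAt Gamma (2 * (-eulerMascheroniConstant + 3 / 2)) (2 * 1 + 1) := by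
    convert hasDerivAt_Gamma_nat 2 using 1 <;> norm_num [harmonic]
  have h2 : HasDerivAt (fun x => Gamma (x + 1)) (-eulerMascheroniConstant + 1) 1 :=
    hΓ2.comp_add_const 1 1
  have h3 : HasDerivAt (fun x => Gamma (2 * x + 1))
      (2 * (-eulerMascheroniConstant + 3 / 2) * 2) 1 := by
    have hlin : HasDerivAt (fun x : ℝ => 2 * x + 1) 2 1 := by
      simpa using ((hasDerivAt_id' (1 : ℝ)).const_mul 2).add_const 1
    exact hΓ3.comp (h := fun x : ℝ => 2 * x + 1) 1 hlin
  have := (h3.log (by norm_num [Gamma_three])).sub ((h2.log (by norm_num)).const_mul 2)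
  norm_num [Gamma_three] at this
  exact this.congr_deriv (by ring)

theorem log_two_add_sub_one_le_logCentralBinomGamma {x : ℝ} (hx : -(1 / 2) < x) :
    log 2 + (x - 1) ≤ logCentralBinomGamma x := by
  have hconv : ConvexOn ℝ (Ioi (-(1 / 2))) fun x => logCentralBinomGamma x - x :=
    convexOn_logCentralBinomGamma.sub (concaveOn_id (convex_Ioi _))
  have hderiv : HasDerivAt (fun x => logCentralBinomGamma x - x) 0 1 :=
    (hasDerivAt_logCentralBinomGamma_one.sub (hasDerivAt_id' 1)).congr_deriv (sub_self 1)
  have hmin := hconv.isMinOn_of_rightDeriv_eq_zero (by norm_num [interior_Ioi])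
    (hderiv.hasDerivWithinAt.derivWithin (uniqueDiffWithinAt_Ioi 1))
  have h : logCentralBinomGamma 1 - 1 ≤ logCentralBinomGamma x - x := hmin hx
  rw [logCentralBinomGamma_one] at h
  linarith

theorem two_mul_exp_sub_one_mul_Gamma_sq_le {x : ℝ} (hx : -(1 / 2) < x) :
    2 * exp (x - 1) * Gamma (x + 1) ^ 2 ≤ Gamma (2 * x + 1) := by
  have h1 : 0 < Gamma (x + 1) := Gamma_pos_of_pos (by linarith)
  have h2 : 0 < Gamma (2 * x + 1) := Gamma_pos_of_pos (by linarith)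
  rw [← log_le_log_iff (by positivity) h2, log_mul (by positivity) (by positivity),
    log_mul (by positivity) (by positivity), log_exp, log_pow]
  have := log_two_add_sub_one_le_logCentralBinomGamma hx
  rw [logCentralBinomGamma] at this
  push_cast
  linarith

theorem mul_Gamma_sq_div_Gamma_le_rpow {c x : ℝ} (hc : 2 / exp 1 ≤ c) (hx : 1 ≤ x) :
    c * Gamma (x + 1) ^ 2 / Gamma (2 * x + 1) ≤ (c / 2) ^ x := by
  have hc2 : exp (-1) ≤ c / 2 := by
    rw [exp_neg]
    linarith [div_eq_mul_inv 2 (exp 1)]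
  have hc0 : 0 < c / 2 := (exp_pos _).trans_le hc2
  have hΓ : 0 < Gamma (2 * x + 1) := Gamma_pos_of_pos (by linarith)
  have hexp : exp (-1) ^ (x - 1) * exp (x - 1) = 1 := by
    rw [← exp_mul, ← exp_add]
    simp
  calc c * Gamma (x + 1) ^ 2 / Gamma (2 * x + 1) ≤ c / 2 * exp (-1) ^ (x - 1) := by
        rw [div_le_iff₀ hΓ]
        calc c * Gamma (x + 1) ^ 2
            = c / 2 * exp (-1) ^ (x - 1) * (2 * exp (x - 1) * Gamma (x + 1) ^ 2) := by
              linear_combination (-(c * Gamma (x + 1) ^ 2)) * hexp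
          _ ≤ c / 2 * exp (-1) ^ (x - 1) * Gamma (2 * x + 1) := by
              gcongr
              exact two_mul_exp_sub_one_mul_Gamma_sq_le (by linarith)
    _ ≤ c / 2 * (c / 2) ^ (x - 1) := by gcongr
    _ = (c / 2) ^ x := by rw [rpow_sub_one hc0.ne', mul_div_cancel₀ _ hc0.ne']

theorem ciSup_eq_of_forall_le_of_eq {α ι : Type*} [ConditionallyCompleteLattice α] {f : ι → α}
    {a : α} (h : ∀ i, f i ≤ a) (i₀ : ι) (hi₀ : f i₀ = a) : ⨆ i, f i = a :=
  have : Nonempty ι := ⟨i₀⟩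
  le_antisymm (ciSup_le h) (le_ciSup_of_le ⟨a, forall_mem_range.2 h⟩ i₀ hi₀.ge)

/-- Optimization of Section 6: for `c ≥ 2/e`, `(c Γ(x+1)²/Γ(2x+1))^{1/x} ≤ c/2` for all
`x ≥ 1`, with equality at `x = 1`; in particular, for `c ≥ 1` the suprema over reals `x ≥ 1`
and over integers `k ≥ 1` both equal `c/2`. -/
theorem gamma_ratio_optimization (c : ℝ) (hc : 2 / Real.exp 1 ≤ c) :
    (∀ x : ℝ, 1 ≤ x →
        (c * Real.Gamma (x + 1) ^ 2 / Real.Gamma (2 * x + 1)) ^ (1 / x) ≤ c / 2) ∧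
      (c * Real.Gamma ((1 : ℝ) + 1) ^ 2 / Real.Gamma (2 * (1 : ℝ) + 1)) ^ (1 / (1 : ℝ)) =
        c / 2 ∧
      (1 ≤ c →
        (⨆ x : {x : ℝ // 1 ≤ x},
            (c * Real.Gamma ((x : ℝ) + 1) ^ 2 / Real.Gamma (2 * (x : ℝ) + 1)) ^ (1 / (x : ℝ)))
          = c / 2 ∧
        (⨆ k : {k : ℕ // 1 ≤ k},
            (c * (((k : ℕ).factorial : ℝ)) ^ 2 / (((2 * (k : ℕ)).factorial : ℝ)))
              ^ (1 / ((k : ℕ) : ℝ)))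
          = c / 2) := by
  have hc0 : 0 < c := lt_of_lt_of_le (by positivity) hc
  have hle : ∀ x : ℝ, 1 ≤ x →
      (c * Gamma (x + 1) ^ 2 / Gamma (2 * x + 1)) ^ (1 / x) ≤ c / 2 := by
    intro x hx
    have hΓ : 0 < Gamma (2 * x + 1) := Gamma_pos_of_pos (by linarith)
    rw [one_div, rpow_inv_le_iff_of_pos (by positivity) (by positivity) (by linarith)]
    exact mul_Gamma_sq_div_Gamma_le_rpow hc hx
  have hone :
      (c * Gamma ((1 : ℝ) + 1) ^ 2 / Gamma (2 * (1 : ℝ) + 1)) ^ (1 / (1 : ℝ)) = c / 2 := by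
    norm_num [Gamma_three]
  have hfact (k : ℕ) : (c * (k.factorial : ℝ) ^ 2 / ((2 * k).factorial : ℝ)) ^ (1 / (k : ℝ)) =
      (c * Gamma (k + 1) ^ 2 / Gamma (2 * k + 1)) ^ (1 / (k : ℝ)) := by
    rw [show (2 : ℝ) * k + 1 = (2 * k : ℕ) + 1 by push_cast; ring, Gamma_nat_eq_factorial,
      Gamma_nat_eq_factorial]
  refine ⟨hle, hone, fun _ => ⟨?_, ?_⟩⟩
  · exact ciSup_eq_of_forall_le_of_eq (fun x => hle x x.2) ⟨1, le_rfl⟩ hone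
  · refine ciSup_eq_of_forall_le_of_eq (fun k => ?_) ⟨1, le_rfl⟩ ?_
    · rw [hfact]
      exact hle k (by exact_mod_cast k.2)
    · norm_num [Nat.factorial]
end

section
/- Let c ≥ 2/e be a real number. Then the function Φ(x) := exp( (1/x) · log( c · Γ(x+1)² / Γ(2x+1) ) ) is nonincreasing on [1, ∞); that is, for all 1 ≤ x ≤ y, ( c · Γ(y+1)² / Γ(2y+1) )^{1/y} ≤ ( c · Γ(x+1)² / Γ(2x+1) )^{1/x}. -/
/-!
Write `L x = 2 log Γ(x+1) - log Γ(2x+1)`. In the Gauss product for `Γ(2x+1)` pair the factors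
`2x+1+2i` and `2x+2+2i = 2(x+1+i)`: the approximants of `L` become an affine function plus
`∑ i, log (2 - (x+1+i)⁻¹)`, so `L` is a pointwise limit of concave functions on `(-1/2, ∞)`.
Moreover `L'(1) = 2 Γ'(2)/Γ(2) - 2 Γ'(3)/Γ(3) = -1`. Hence `F = log c + L` is concave with tangent
`F 1 - (x - 1)` at `1`, and `c ≥ 2/e` says `F 1 = log c - log 2 ≥ -1`, i.e. this tangent passes
through or above the origin. Then `F x / x` decreases on `[1, ∞)`, and `Φ x = exp (F x / x)`.
-/

open Real Set Filter Topology Finset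
open scoped Nat

theorem Finset.sum_range_two_mul {M : Type*} [AddCommMonoid M] (f : ℕ → M) (n : ℕ) :
    ∑ m ∈ range (2 * n), f m = ∑ i ∈ range n, (f (2 * i) + f (2 * i + 1)) := by
  induction n with
  | zero => simp
  | succ n ih => rw [mul_add, mul_one, sum_range_succ, sum_range_succ, ih, sum_range_succ, add_assoc]

section Concavity

variable {ι E : Type*} [AddCommGroup E] [Module ℝ E] {s : Set E}

theorem ConcaveOn.log {f : E → ℝ} (hf : ConcaveOn ℝ s f) (hpos : ∀ x ∈ s, 0 < f x) :
    ConcaveOn ℝ s fun x => Real.log (f x) := by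
  refine ⟨hf.1, fun x hx y hy a b ha hb hab => ?_⟩
  have hlog := strictConcaveOn_log_Ioi.concaveOn
  calc a • Real.log (f x) + b • Real.log (f y) ≤ Real.log (a • f x + b • f y) :=
        hlog.2 (hpos x hx) (hpos y hy) ha hb hab
    _ ≤ Real.log (f (a • x + b • y)) :=
        log_le_log (hlog.1 (hpos x hx) (hpos y hy) ha hb hab) (hf.2 hx hy ha hb hab)

theorem concaveOn_sum {t : Finset ι} {F : ι → E → ℝ} (hs : Convex ℝ s)
    (hF : ∀ i ∈ t, ConcaveOn ℝ s (F i)) : ConcaveOn ℝ s fun x => ∑ i ∈ t, F i x := by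
  classical
  induction t using Finset.induction_on with
  | empty => simpa using concaveOn_const 0 hs
  | insert i t hi ih =>
    simp only [sum_insert hi]
    exact (hF i (mem_insert_self i t)).add (ih fun j hj => hF j (mem_insert_of_mem hj))

theorem concaveOn_of_tendsto {l : Filter ι} [l.NeBot] {F : ι → E → ℝ} {f : E → ℝ}
    (hs : Convex ℝ s) (hF : ∀ᶠ n in l, ConcaveOn ℝ s (F n))
    (hlim : ∀ x ∈ s, Tendsto (fun n => F n x) l (𝓝 (f x))) : ConcaveOn ℝ s f := by
  refine ⟨hs, fun x hx y hy a b ha hb hab => ?_⟩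
  refine le_of_tendsto_of_tendsto (((hlim x hx).const_smul a).add ((hlim y hy).const_smul b))
    (hlim _ (hs hx hy ha hb hab)) ?_
  filter_upwards [hF] with n hn using hn.2 hx hy ha hb hab

end Concavity

theorem concaveOn_mul_add (A B : ℝ) {s : Set ℝ} (hs : Convex ℝ s) :
    ConcaveOn ℝ s fun x => x * A + B :=
  (((LinearMap.id.smulRight A : ℝ →ₗ[ℝ] ℝ).concaveOn hs).add_const B).congr fun x _ => by simp

theorem ConcaveOn.antitoneOn_div_self {f : ℝ → ℝ} {a f' : ℝ} (ha : 0 < a)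
    (hf : ConcaveOn ℝ (Ici a) f) (hf' : HasDerivAt f f' a) (h : a * f' ≤ f a) :
    AntitoneOn (fun x => f x / x) (Ici a) := by
  intro x (hx : a ≤ x) y (hy : a ≤ y) hxy
  rcases eq_or_lt_of_le hxy with rfl | hxy
  · rfl
  have hay : a < y := hx.trans_lt hxy
  have hderiv : slope f a y ≤ f' := hf.slope_le_of_hasDerivAt self_mem_Ici hy hay hf'
  have hslope : slope f a y * (x - a) ≤ slope f a x * (x - a) := by
    rcases eq_or_lt_of_le hx with rfl | hax
    · simp
    exact mul_le_mul_of_nonneg_right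
      (hf.antitoneOn_slope_gt self_mem_Ici ⟨hx, hax⟩ ⟨hy, hay⟩ hxy.le) (sub_nonneg.2 hx)
  have hfx := sub_smul_slope f a x
  have hfy := sub_smul_slope f a y
  rw [smul_eq_mul, vsub_eq_sub] at hfx hfy
  dsimp only
  rw [div_le_div_iff₀ (ha.trans hay) (ha.trans_le hx)]
  nlinarith [mul_le_mul_of_nonneg_left hderiv ha.le]

theorem two_sub_inv_pos {u : ℝ} (hu : 1 / 2 < u) : 0 < 2 - u⁻¹ := by
  have : u⁻¹ < 2 := by rw [inv_lt_comm₀ (by linarith) two_pos]; linarith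
  linarith

theorem concaveOn_log_two_sub_inv : ConcaveOn ℝ (Ioi (1 / 2)) fun u => log (2 - u⁻¹) := by
  have hinv : ConcaveOn ℝ (Ioi (1 / 2)) fun u : ℝ => 2 - u⁻¹ :=
    (((convexOn_zpow (-1)).subset (Ioi_subset_Ioi (by norm_num)) (convex_Ioi _)).neg.add_const
      2).congr fun u _ => by simp; ring
  exact hinv.log fun u hu => two_sub_inv_pos hu

noncomputable def logGammaRatio (x : ℝ) : ℝ :=
  2 * log (Gamma (x + 1)) - log (Gamma (2 * x + 1))

noncomputable def logGammaRatioSeq (x : ℝ) (n : ℕ) : ℝ :=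
  2 * BohrMollerup.logGammaSeq (x + 1) n - BohrMollerup.logGammaSeq (2 * x + 1) (2 * n + 1)

theorem tendsto_logGammaRatioSeq {x : ℝ} (hx : -1 / 2 < x) :
    Tendsto (logGammaRatioSeq x) atTop (𝓝 (logGammaRatio x)) := by
  have hodd : Tendsto (fun n : ℕ => 2 * n + 1) atTop atTop :=
    tendsto_atTop_mono (fun n => by dsimp; omega) tendsto_id
  exact ((BohrMollerup.tendsto_log_gamma (by linarith)).const_mul 2).sub
    ((BohrMollerup.tendsto_log_gamma (by linarith)).comp hodd)

theorem logGammaRatioSeq_eq {x : ℝ} (hx : -1 / 2 < x) (n : ℕ) :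
    logGammaRatioSeq x n =
      x * (2 * log n - 2 * log (2 * n + 1)) + (2 * log n + 2 * log n !
        - log (2 * n + 1) - log (2 * n + 1)! + (n + 1) * log 2)
        + ∑ i ∈ range (n + 1), log (2 - (x + 1 + i)⁻¹) := by
  have hpair : ∀ i ∈ range (n + 1),
      log (2 * x + 1 + (2 * i : ℕ)) + log (2 * x + 1 + (2 * i + 1 : ℕ))
        = 2 * log (x + 1 + i) + log (2 - (x + 1 + i)⁻¹) + log 2 := by
    intro i _
    have hu : 1 / 2 < x + 1 + i := by have := i.cast_nonneg (α := ℝ); linarith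
    have hu0 : x + 1 + i ≠ 0 := by linarith
    have h1 : 2 * x + 1 + (2 * i : ℕ) = (x + 1 + i) * (2 - (x + 1 + i)⁻¹) := by
      push_cast; field_simp; ring
    have h2 : 2 * x + 1 + (2 * i + 1 : ℕ) = 2 * (x + 1 + i) := by push_cast; ring
    rw [h1, h2, log_mul hu0 (two_sub_inv_pos hu).ne', log_mul two_ne_zero hu0]
    ring
  rw [logGammaRatioSeq, BohrMollerup.logGammaSeq, BohrMollerup.logGammaSeq,
    show 2 * n + 1 + 1 = 2 * (n + 1) by ring, sum_range_two_mul, sum_congr rfl hpair,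
    sum_add_distrib, sum_add_distrib, ← mul_sum, sum_const, card_range]
  push_cast
  ring

theorem concaveOn_logGammaRatioSeq (n : ℕ) :
    ConcaveOn ℝ (Ioi (-1 / 2)) fun x => logGammaRatioSeq x n := by
  have hterm (i : ℕ) : ConcaveOn ℝ (Ioi (-1 / 2)) fun x : ℝ => log (2 - (x + 1 + i)⁻¹) := by
    refine ((concaveOn_log_two_sub_inv.translate_left (1 + i : ℝ)).subset (fun x hx => ?_)
      (convex_Ioi _)).congr fun x _ => by simp [add_assoc]
    have := i.cast_nonneg (α := ℝ)
    simp only [Set.mem_preimage, Set.mem_Ioi] at hx ⊢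
    linarith
  exact ((concaveOn_mul_add _ _ (convex_Ioi _)).add
    (concaveOn_sum (convex_Ioi _) fun i _ => hterm i)).congr
    fun x hx => (logGammaRatioSeq_eq hx n).symm

theorem concaveOn_logGammaRatio : ConcaveOn ℝ (Ioi (-1 / 2)) logGammaRatio :=
  concaveOn_of_tendsto (l := atTop) (convex_Ioi _) (.of_forall concaveOn_logGammaRatioSeq)
    fun _ hx => tendsto_logGammaRatioSeq hx

theorem logGammaRatio_one : logGammaRatio 1 = -log 2 := by
  norm_num [logGammaRatio, show (3 : ℝ) = 2 + 1 by norm_num, Gamma_add_one]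

theorem hasDerivAt_logGammaRatio_one : HasDerivAt logGammaRatio (-1) 1 := by
  have h2 : HasDerivAt Gamma (1 - eulerMascheroniConstant) (1 + 1) := by
    convert hasDerivAt_Gamma_nat 1 using 1 <;> norm_num [harmonic]; ring
  have h3 : HasDerivAt Gamma (3 - 2 * eulerMascheroniConstant) (2 + 1) := by
    convert hasDerivAt_Gamma_nat 2 using 1 <;> norm_num [harmonic]; ring
  have hA := (h2.comp_add_const 1 1).log (Gamma_pos_of_pos (by norm_num)).ne'
  have hB := (HasDerivAt.comp_of_eq 1 h3 (((hasDerivAt_id (1 : ℝ)).const_mul 2).add_const 1)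
    (by norm_num)).log (Gamma_pos_of_pos (by norm_num)).ne'
  refine ((hA.const_mul 2).sub hB).congr_deriv ?_
  norm_num [show (3 : ℝ) = 2 + 1 by norm_num, Gamma_add_one]
  ring

theorem mul_gamma_sq_div_rpow {c z : ℝ} (hc : 0 < c) (hz : -1 / 2 < z) :
    (c * Gamma (z + 1) ^ 2 / Gamma (2 * z + 1)) ^ (1 / z)
      = exp ((log c + logGammaRatio z) / z) := by
  have h1 : 0 < Gamma (z + 1) := Gamma_pos_of_pos (by linarith)
  have h2 : 0 < Gamma (2 * z + 1) := Gamma_pos_of_pos (by linarith)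
  rw [rpow_def_of_pos (by positivity), log_div (by positivity) h2.ne',
    log_mul hc.ne' (by positivity), log_pow, logGammaRatio]
  ring_nf

/-- The function `Φ(x) = (c Γ(x+1)²/Γ(2x+1))^{1/x}` is nonincreasing on `[1,∞)` when
`c ≥ 2/e`. -/
theorem gamma_ratio_antitone (c : ℝ) (hc : 2 / Real.exp 1 ≤ c) :
    ∀ x y : ℝ, 1 ≤ x → x ≤ y →
      (c * Real.Gamma (y + 1) ^ 2 / Real.Gamma (2 * y + 1)) ^ (1 / y) ≤
        (c * Real.Gamma (x + 1) ^ 2 / Real.Gamma (2 * x + 1)) ^ (1 / x) := by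
  intro x y hx hxy
  have hc0 : 0 < c := lt_of_lt_of_le (by positivity) hc
  have hconc : ConcaveOn ℝ (Ici 1) fun z => log c + logGammaRatio z :=
    (concaveOn_const _ (convex_Ici 1)).add
      (concaveOn_logGammaRatio.subset (Ici_subset_Ioi.2 (by norm_num)) (convex_Ici 1))
  have htangent : 1 * (-1) ≤ log c + logGammaRatio 1 := by
    have := log_le_log (by positivity) hc
    rw [log_div two_ne_zero (exp_ne_zero 1), log_exp] at this
    rw [logGammaRatio_one]
    linarith
  have hanti := hconc.antitoneOn_div_self one_pos (hasDerivAt_logGammaRatio_one.const_add _)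
    htangent hx (hx.trans hxy) hxy
  rw [mul_gamma_sq_div_rpow hc0 (by linarith), mul_gamma_sq_div_rpow hc0 (by linarith)]
  exact exp_le_exp.2 hanti
end
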